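/- The optimal value of max Σ_j τ_j·f_j(P_j) subject to τ_j ≥ 0, Σ τ_j = 1, Σ τ_j·P_j ≤ P̄ with f_j(P) = ω_j log(1+η_j P) equals the concave envelope (least concave majorant) of the function h(P) = max_j f_j(P), evaluated at P̄. -/

import Mathlib

/-!
Let `V(y) = sSup (allocationValues f y)` be the optimal value under the power budget `y`.
Every concave majorant `g` of the `f_j` dominates `V`: raising every `P_j` by the unused budget
makes the budget tight without decreasing the objective (the `f_j` are monotone), and then
Jensen gives `∑ τ_j g(P_j) ≤ g(y)`. Conversely `V` is itself a concave majorant: a single-user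
allocation gives `f_j ≤ V`, and mixing two allocations user by user is possible because the
perspective `(t, x) ↦ t f(x / t)` of a concave `f` is concave. Hence `V(P̄)` is both the optimal
value and the least value of a concave majorant at `P̄`.
-/

open Finset Set

/-- Concavity of the perspective `(t, x) ↦ t f(x / t)`; at `s + t = 0` both sides vanish. -/
lemma ConcaveOn.mul_add_mul_le_perspective {D : Set ℝ} {f : ℝ → ℝ} (hf : ConcaveOn ℝ D f)
    {s t x y : ℝ} (hs : 0 ≤ s) (ht : 0 ≤ t) (hx : x ∈ D) (hy : y ∈ D) :
    s * f x + t * f y ≤ (s + t) * f ((s * x + t * y) / (s + t)) := by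
  rcases (add_nonneg hs ht).eq_or_lt with hst | hst
  · obtain ⟨rfl, rfl⟩ : s = 0 ∧ t = 0 := ⟨by linarith, by linarith⟩
    simp
  · have hjensen := hf.2 hx hy (div_nonneg hs hst.le) (div_nonneg ht hst.le)
      (by rw [← add_div, div_self hst.ne'])
    calc s * f x + t * f y = (s + t) * ((s / (s + t)) • f x + (t / (s + t)) • f y) := by
          simp only [smul_eq_mul]; field_simp
      _ ≤ (s + t) * f ((s / (s + t)) • x + (t / (s + t)) • y) :=
          mul_le_mul_of_nonneg_left hjensen hst.le
      _ = (s + t) * f ((s * x + t * y) / (s + t)) := by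
          simp only [smul_eq_mul]; congr 2; field_simp

lemma concaveOn_sSup_of_forall_exists_le {E : Type*} [AddCommGroup E] [Module ℝ E]
    {D : Set E} (hD : Convex ℝ D) {F : E → Set ℝ} (hne : ∀ x ∈ D, (F x).Nonempty)
    (hbdd : ∀ x ∈ D, BddAbove (F x))
    (hmix : ∀ x ∈ D, ∀ y ∈ D, ∀ a b : ℝ, 0 ≤ a → 0 ≤ b → a + b = 1 →
      ∀ u ∈ F x, ∀ v ∈ F y, ∃ w ∈ F (a • x + b • y), a * u + b * v ≤ w) :
    ConcaveOn ℝ D fun x => sSup (F x) := by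
  refine ⟨hD, fun x hx y hy a b ha hb hab => ?_⟩
  simp only [smul_eq_mul]
  rw [← smul_eq_mul, ← smul_eq_mul, ← Real.sSup_smul_of_nonneg ha, ← Real.sSup_smul_of_nonneg hb,
    ← csSup_add (hne x hx).smul_set ((hbdd x hx).smul_of_nonneg ha) (hne y hy).smul_set
      ((hbdd y hy).smul_of_nonneg hb)]
  refine csSup_le ((hne x hx).smul_set.add (hne y hy).smul_set) ?_
  rintro _ ⟨_, ⟨u, hu, rfl⟩, _, ⟨v, hv, rfl⟩, rfl⟩
  obtain ⟨w, hw, hle⟩ := hmix x hx y hy a b ha hb hab u hu v hv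
  exact hle.trans (le_csSup (hbdd _ (hD hx hy ha hb hab)) hw)

lemma ConcaveOn.mul_le_add_abs {h : ℝ → ℝ} (hh : ConcaveOn ℝ (Ici 0) h)
    (hmono : MonotoneOn h (Ici 0)) {τ x y : ℝ} (hτ : 0 ≤ τ) (hτ1 : τ ≤ 1) (hx : 0 ≤ x)
    (hxy : τ * x ≤ y) : τ * h x ≤ h y + |h 0| := by
  have hjensen := hh.2 (mem_Ici.2 hx) (mem_Ici.2 le_rfl) hτ (sub_nonneg.2 hτ1) (by ring)
  simp only [smul_eq_mul, mul_zero, add_zero] at hjensen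
  have hτx : τ * h x ≤ h (τ * x) - (1 - τ) * h 0 := by linarith
  have hmono' : h (τ * x) ≤ h y := hmono (mul_nonneg hτ hx) ((mul_nonneg hτ hx).trans hxy) hxy
  have habs : -((1 - τ) * h 0) ≤ |h 0| := by
    nlinarith [neg_abs_le (h 0), le_abs_self (h 0), abs_nonneg (h 0)]
  linarith

section Allocation

variable {ι : Type*} [Fintype ι] {f : ι → ℝ → ℝ}

def allocationValues (f : ι → ℝ → ℝ) (y : ℝ) : Set ℝ :=
  {v | ∃ τ P : ι → ℝ, (∀ j, 0 ≤ τ j) ∧ (∑ j, τ j) = 1 ∧ (∀ j, 0 ≤ P j) ∧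
    (∑ j, τ j * P j) ≤ y ∧ v = ∑ j, τ j * f j (P j)}

def concaveMajorantValues (f : ι → ℝ → ℝ) (y : ℝ) : Set ℝ :=
  {v | ∃ g : ℝ → ℝ, ConcaveOn ℝ (Ici 0) g ∧ (∀ x, 0 ≤ x → ∀ j, f j x ≤ g x) ∧ v = g y}

lemma apply_mem_allocationValues {y : ℝ} (hy : 0 ≤ y) (j : ι) :
    f j y ∈ allocationValues f y := by
  classical
  refine ⟨Pi.single j 1, Pi.single j y, fun i => ?_, by simp, fun i => ?_, ?_, ?_⟩
  · by_cases h : i = j <;> simp [h]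
  · by_cases h : i = j <;> simp [h, hy]
  · simp [Pi.single_apply]
  · simp [Pi.single_apply]

lemma allocationValues_nonempty [Nonempty ι] {y : ℝ} (hy : 0 ≤ y) :
    (allocationValues f y).Nonempty :=
  ⟨_, apply_mem_allocationValues hy (Classical.arbitrary ι)⟩

lemma le_of_mem_allocationValues (hmono : ∀ j, MonotoneOn (f j) (Ici 0)) {g : ℝ → ℝ}
    (hg : ConcaveOn ℝ (Ici 0) g) (hfg : ∀ x, 0 ≤ x → ∀ j, f j x ≤ g x) {y v : ℝ}
    (hv : v ∈ allocationValues f y) : v ≤ g y := by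
  obtain ⟨τ, P, hτ, hτ1, hP, hbudget, rfl⟩ := hv
  set δ := y - ∑ j, τ j * P j
  have hδ : 0 ≤ δ := sub_nonneg.2 hbudget
  have hP' : ∀ j, 0 ≤ P j + δ := fun j => add_nonneg (hP j) hδ
  have htight : ∑ j, τ j * (P j + δ) = y := by
    simp only [mul_add, sum_add_distrib, ← sum_mul, hτ1, δ]; ring
  calc ∑ j, τ j * f j (P j) ≤ ∑ j, τ j * g (P j + δ) := by
        gcongr with j
        · exact hτ j
        · exact (hmono j (hP j) (hP' j) (le_add_of_nonneg_right hδ)).trans (hfg _ (hP' j) j)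
    _ ≤ g (∑ j, τ j * (P j + δ)) :=
        hg.le_map_sum (fun j _ => hτ j) hτ1 (fun j _ => hP' j)
    _ = g y := by rw [htight]

lemma bddAbove_allocationValues (hf : ∀ j, ConcaveOn ℝ (Ici 0) (f j))
    (hmono : ∀ j, MonotoneOn (f j) (Ici 0)) (y : ℝ) : BddAbove (allocationValues f y) := by
  refine ⟨∑ j, (f j y + |f j 0|), ?_⟩
  rintro _ ⟨τ, P, hτ, hτ1, hP, hbudget, rfl⟩
  have hτP : ∀ j, 0 ≤ τ j * P j := fun j => mul_nonneg (hτ j) (hP j)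
  refine sum_le_sum fun j _ => (hf j).mul_le_add_abs (hmono j) (hτ j) ?_ (hP j) ?_
  · exact hτ1 ▸ single_le_sum (fun i _ => hτ i) (mem_univ j)
  · exact (single_le_sum (fun i _ => hτP i) (mem_univ j)).trans hbudget

lemma exists_mem_allocationValues_ge (hf : ∀ j, ConcaveOn ℝ (Ici 0) (f j)) {a b x y u v : ℝ}
    (ha : 0 ≤ a) (hb : 0 ≤ b) (hab : a + b = 1) (hu : u ∈ allocationValues f x)
    (hv : v ∈ allocationValues f y) :
    ∃ w ∈ allocationValues f (a * x + b * y), a * u + b * v ≤ w := by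
  obtain ⟨τ₁, P₁, hτ₁, hτ₁1, hP₁, hbudget₁, rfl⟩ := hu
  obtain ⟨τ₂, P₂, hτ₂, hτ₂1, hP₂, hbudget₂, rfl⟩ := hv
  set s : ι → ℝ := fun j => a * τ₁ j
  set t : ι → ℝ := fun j => b * τ₂ j
  have hs : ∀ j, 0 ≤ s j := fun j => mul_nonneg ha (hτ₁ j)
  have ht : ∀ j, 0 ≤ t j := fun j => mul_nonneg hb (hτ₂ j)
  set P : ι → ℝ := fun j => (s j * P₁ j + t j * P₂ j) / (s j + t j)
  have hτP : ∀ j, (s j + t j) * P j = s j * P₁ j + t j * P₂ j := fun j =>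
    mul_div_cancel_of_imp' fun h0 => by
      obtain ⟨h₁, h₂⟩ : s j = 0 ∧ t j = 0 := ⟨by linarith [hs j, ht j], by linarith [hs j, ht j]⟩
      simp [h₁, h₂]
  refine ⟨_, ⟨fun j => s j + t j, P, fun j => add_nonneg (hs j) (ht j), ?_,
    fun j => div_nonneg (add_nonneg (mul_nonneg (hs j) (hP₁ j)) (mul_nonneg (ht j) (hP₂ j)))
      (add_nonneg (hs j) (ht j)), ?_, rfl⟩, ?_⟩
  · simp only [s, t, sum_add_distrib, ← mul_sum, hτ₁1, hτ₂1, mul_one, hab]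
  · simp only [hτP, s, t, sum_add_distrib, mul_assoc, ← mul_sum]
    nlinarith [mul_le_mul_of_nonneg_left hbudget₁ ha, mul_le_mul_of_nonneg_left hbudget₂ hb]
  · simp only [mul_sum, ← sum_add_distrib, ← mul_assoc]
    exact sum_le_sum fun j _ =>
      (hf j).mul_add_mul_le_perspective (hs j) (ht j) (mem_Ici.2 (hP₁ j)) (mem_Ici.2 (hP₂ j))

lemma concaveOn_sSup_allocationValues [Nonempty ι] (hf : ∀ j, ConcaveOn ℝ (Ici 0) (f j))
    (hmono : ∀ j, MonotoneOn (f j) (Ici 0)) :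
    ConcaveOn ℝ (Ici 0) fun y => sSup (allocationValues f y) :=
  concaveOn_sSup_of_forall_exists_le (convex_Ici 0) (fun _ hy => allocationValues_nonempty hy)
    (fun y _ => bddAbove_allocationValues hf hmono y)
    fun _ _ _ _ _ _ ha hb hab _ hu _ hv => exists_mem_allocationValues_ge hf ha hb hab hu hv

lemma isLeast_concaveMajorantValues [Nonempty ι] (hf : ∀ j, ConcaveOn ℝ (Ici 0) (f j))
    (hmono : ∀ j, MonotoneOn (f j) (Ici 0)) {y : ℝ} (hy : 0 ≤ y) :
    IsLeast (concaveMajorantValues f y) (sSup (allocationValues f y)) := by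
  refine ⟨⟨_, concaveOn_sSup_allocationValues hf hmono, fun x hx j => ?_, rfl⟩, ?_⟩
  · exact le_csSup (bddAbove_allocationValues hf hmono x) (apply_mem_allocationValues hx j)
  · rintro _ ⟨g, hg, hfg, rfl⟩
    exact csSup_le (allocationValues_nonempty hy) fun v hv =>
      le_of_mem_allocationValues hmono hg hfg hv

theorem isLUB_allocationValues_sInf_concaveMajorantValues [Nonempty ι]
    (hf : ∀ j, ConcaveOn ℝ (Ici 0) (f j)) (hmono : ∀ j, MonotoneOn (f j) (Ici 0)) {y : ℝ}
    (hy : 0 ≤ y) : IsLUB (allocationValues f y) (sInf (concaveMajorantValues f y)) := by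
  rw [(isLeast_concaveMajorantValues hf hmono hy).csInf_eq]
  exact isLUB_csSup (allocationValues_nonempty hy) (bddAbove_allocationValues hf hmono y)

end Allocation

lemma concaveOn_mul_log_one_add_mul {ω η : ℝ} (hω : 0 ≤ ω) (hη : 0 ≤ η) :
    ConcaveOn ℝ (Ici 0) fun x => ω * Real.log (1 + η * x) := by
  have hlog := strictConcaveOn_log_Ioi.concaveOn.comp_affineMap
    (AffineMap.lineMap (1 : ℝ) (1 + η))
  have hsub : Ici (0 : ℝ) ⊆ AffineMap.lineMap (1 : ℝ) (1 + η) ⁻¹' Ioi 0 := fun x hx => by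
    simp only [Set.mem_preimage, AffineMap.lineMap_apply_module', smul_eq_mul, Set.mem_Ici,
      Set.mem_Ioi] at hx ⊢
    nlinarith
  have heq : (fun x => ω * Real.log (1 + η * x))
      = fun x => ω • (Real.log ∘ AffineMap.lineMap (1 : ℝ) (1 + η)) x := by
    funext x
    simp only [Function.comp_apply, AffineMap.lineMap_apply_module', smul_eq_mul]
    ring_nf
  rw [heq]
  exact (hlog.subset hsub (convex_Ici 0)).smul hω

lemma monotoneOn_mul_log_one_add_mul {ω η : ℝ} (hω : 0 ≤ ω) (hη : 0 ≤ η) :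
    MonotoneOn (fun x => ω * Real.log (1 + η * x)) (Ici 0) := fun x hx y _ hxy =>
  mul_le_mul_of_nonneg_left
    (Real.log_le_log (by nlinarith [mem_Ici.1 hx]) (by nlinarith [mem_Ici.1 hx])) hω

/-- The optimal value of the orthogonal sharing problem equals the least concave
majorant of h(P) = max_j f_j(P) evaluated at P̄. -/
theorem stmt_12 {n : ℕ} (hn : 0 < n) (ω η : Fin n → ℝ)
    (hω : ∀ j, 0 < ω j) (hη : ∀ j, 0 < η j) (Pbar : ℝ) (hP : 0 < Pbar) :
    IsLUB {v : ℝ | ∃ τ P : Fin n → ℝ,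
        (∀ j, 0 ≤ τ j) ∧ (∑ j, τ j) = 1 ∧ (∀ j, 0 ≤ P j) ∧ (∑ j, τ j * P j) ≤ Pbar ∧
        v = ∑ j, τ j * (ω j * Real.log (1 + η j * P j))}
      (sInf {v : ℝ | ∃ g : ℝ → ℝ, ConcaveOn ℝ (Set.Ici 0) g ∧
        (∀ y, 0 ≤ y → ∀ j, ω j * Real.log (1 + η j * y) ≤ g y) ∧ v = g Pbar}) := by
  have : Nonempty (Fin n) := Fin.pos_iff_nonempty.1 hn
  exact isLUB_allocationValues_sInf_concaveMajorantValues
    (f := fun j x => ω j * Real.log (1 + η j * x))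
    (fun j => concaveOn_mul_log_one_add_mul (hω j).le (hη j).le)
    (fun j => monotoneOn_mul_log_one_add_mul (hω j).le (hη j).le) hP.le
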